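/- arXiv:1802.07522 — 5 statements merged into one kernel-verified Lean document; each statement's English description precedes it below -/
import Mathlib

section
/- Let m ≥ 1 and let A_1, B_1, ..., A_m, B_m be reals satisfying 0 < A_1 < B_1 < A_2 < B_2 < ... < A_m < B_m. Define ρ_j = ((B_j − A_j)/A_j) · Π_{i ≠ j} (B_i − A_j)/(A_i − A_j), and set a_j = A_j ρ_j/(1 + Σ_{i=1}^m ρ_i) and b_j = ρ_j/(1 + Σ_{i=1}^m ρ_i). Then a_j > 0 and b_j > 0 for all j, Σ_{j=1}^m b_j < 1, and a_j/b_j < a_{j+1}/b_{j+1} for j = 1, ..., m−1; moreover a_j/b_j = A_j for every j. In other words, (a_1, ..., a_m, b_1, ..., b_m) belongs to the domain of the map 𝓛. -/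
section Interlacing

variable {m : ℕ} {A B : ℕ → ℝ}

theorem interlacing_B_lt_A (hAB : ∀ j < m, A j < B j)
    (hBA : ∀ j, j + 1 < m → B j < A (j + 1)) {i j : ℕ} (hij : i < j) (hjm : j < m) :
    B i < A j := by
  induction j, hij using Nat.le_induction with
  | base => exact hBA i hjm
  | succ k hik ih =>
    calc B i < A k := ih (by omega)
      _ < B k := hAB k (by omega)
      _ < A (k + 1) := hBA k hjm

theorem interlacing_A_lt_A (hAB : ∀ j < m, A j < B j)
    (hBA : ∀ j, j + 1 < m → B j < A (j + 1)) {i j : ℕ} (hij : i < j) (hjm : j < m) :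
    A i < A j :=
  (hAB i (hij.trans hjm)).trans (interlacing_B_lt_A hAB hBA hij hjm)

theorem interlacing_A_pos (hA0 : 0 < A 0) (hAB : ∀ j < m, A j < B j)
    (hBA : ∀ j, j + 1 < m → B j < A (j + 1)) {j : ℕ} (hj : j < m) : 0 < A j := by
  rcases Nat.eq_zero_or_pos j with rfl | hpos
  · exact hA0
  · exact hA0.trans (interlacing_A_lt_A hAB hBA hpos hj)

/-- For `i < j` numerator and denominator are both negative, for `j < i` both positive. -/
theorem interlacing_factor_pos (hAB : ∀ j < m, A j < B j)
    (hBA : ∀ j, j + 1 < m → B j < A (j + 1)) {i j : ℕ} (him : i < m) (hjm : j < m)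
    (hne : i ≠ j) : 0 < (B i - A j) / (A i - A j) := by
  rcases hne.lt_or_gt with hij | hji
  · have hBA' := interlacing_B_lt_A hAB hBA hij hjm
    exact div_pos_of_neg_of_neg (by linarith) (by linarith [hAB i him])
  · have hAA := interlacing_A_lt_A hAB hBA hji him
    exact div_pos (by linarith [hAB i him]) (by linarith)

theorem interlacing_rho_pos (hA0 : 0 < A 0) (hAB : ∀ j < m, A j < B j)
    (hBA : ∀ j, j + 1 < m → B j < A (j + 1)) {j : ℕ} (hj : j < m) :
    0 < (B j - A j) / A j * ∏ i ∈ (Finset.range m).erase j, (B i - A j) / (A i - A j) := by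
  refine mul_pos (div_pos (sub_pos.mpr (hAB j hj)) (interlacing_A_pos hA0 hAB hBA hj))
    (Finset.prod_pos fun i hi => ?_)
  obtain ⟨hne, him⟩ := Finset.mem_erase.mp hi
  exact interlacing_factor_pos hAB hBA (Finset.mem_range.mp him) hj hne

end Interlacing

theorem sum_div_one_add_sum_lt_one {ι : Type*} (s : Finset ι) {f : ι → ℝ}
    (hf : ∀ i ∈ s, 0 ≤ f i) : ∑ i ∈ s, f i / (1 + ∑ j ∈ s, f j) < 1 := by
  have hS : 0 ≤ ∑ j ∈ s, f j := Finset.sum_nonneg hf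
  rw [← Finset.sum_div, div_lt_one (by linarith)]
  linarith

theorem stmt_8_general (m : ℕ) (A B : ℕ → ℝ)
    (hA0 : 0 < A 0)
    (hAB : ∀ j < m, A j < B j)
    (hBA : ∀ j, j + 1 < m → B j < A (j + 1))
    (ρ : ℕ → ℝ)
    (hρ : ∀ j, ρ j = (B j - A j) / A j *
      ∏ i ∈ (Finset.range m).erase j, (B i - A j) / (A i - A j))
    (a b : ℕ → ℝ)
    (ha : ∀ j, a j = A j * ρ j / (1 + ∑ i ∈ Finset.range m, ρ i))
    (hb : ∀ j, b j = ρ j / (1 + ∑ i ∈ Finset.range m, ρ i)) :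
    (∀ j < m, 0 < a j) ∧
    (∀ j < m, 0 < b j) ∧
    (∑ j ∈ Finset.range m, b j < 1) ∧
    (∀ j, j + 1 < m → a j / b j < a (j + 1) / b (j + 1)) ∧
    (∀ j < m, a j / b j = A j) := by
  have hρpos : ∀ j < m, 0 < ρ j := fun j hj => hρ j ▸ interlacing_rho_pos hA0 hAB hBA hj
  have hD : 0 < 1 + ∑ i ∈ Finset.range m, ρ i :=
    add_pos_of_pos_of_nonneg one_pos
      (Finset.sum_nonneg fun i hi => (hρpos i (Finset.mem_range.mp hi)).le)
  have hratio : ∀ j < m, a j / b j = A j := fun j hj => by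
    rw [ha, hb, div_div_div_cancel_right₀ hD.ne', mul_div_cancel_right₀ _ (hρpos j hj).ne']
  refine ⟨fun j hj => ?_, fun j hj => ?_, ?_, fun j hj => ?_, hratio⟩
  · rw [ha]; exact div_pos (mul_pos (interlacing_A_pos hA0 hAB hBA hj) (hρpos j hj)) hD
  · rw [hb]; exact div_pos (hρpos j hj) hD
  · simp only [hb]
    exact sum_div_one_add_sum_lt_one _ fun i hi => (hρpos i (Finset.mem_range.mp hi)).le
  · rw [hratio j (by omega), hratio (j + 1) hj]
    exact interlacing_A_lt_A hAB hBA (Nat.lt_succ_self j) hj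

/-- Given reals `0 < A_1 < B_1 < … < A_m < B_m` (0-indexed), with
`ρ_j = ((B_j − A_j)/A_j) · ∏_{i ≠ j} (B_i − A_j)/(A_i − A_j)`,
`a_j = A_j ρ_j/(1 + ∑ᵢ ρ_i)` and `b_j = ρ_j/(1 + ∑ᵢ ρ_i)`, one has `a_j > 0`,
`b_j > 0`, `∑ⱼ b_j < 1`, `a_j/b_j < a_{j+1}/b_{j+1}`, and `a_j/b_j = A_j`;
i.e. `(a, b)` belongs to the domain of the map `𝓛`. -/
theorem stmt_8 (m : ℕ) (hm : 1 ≤ m) (A B : ℕ → ℝ)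
    (hA0 : 0 < A 0)
    (hAB : ∀ j < m, A j < B j)
    (hBA : ∀ j, j + 1 < m → B j < A (j + 1))
    (ρ : ℕ → ℝ)
    (hρ : ∀ j, ρ j = (B j - A j) / A j *
      ∏ i ∈ (Finset.range m).erase j, (B i - A j) / (A i - A j))
    (a b : ℕ → ℝ)
    (ha : ∀ j, a j = A j * ρ j / (1 + ∑ i ∈ Finset.range m, ρ i))
    (hb : ∀ j, b j = ρ j / (1 + ∑ i ∈ Finset.range m, ρ i)) :
    (∀ j < m, 0 < a j) ∧
    (∀ j < m, 0 < b j) ∧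
    (∑ j ∈ Finset.range m, b j < 1) ∧
    (∀ j, j + 1 < m → a j / b j < a (j + 1) / b (j + 1)) ∧
    (∀ j < m, a j / b j = A j) :=
  stmt_8_general m A B hA0 hAB hBA ρ hρ a b ha hb
end

section
/- Let m ≥ 1 and let A_1, B_1, ..., A_m, B_m be reals satisfying 0 < A_1 < B_1 < A_2 < B_2 < ... < A_m < B_m. Define ρ_j = ((B_j − A_j)/A_j) · Π_{i ≠ j} (B_i − A_j)/(A_i − A_j), b_j = ρ_j/(1 + Σ_{i=1}^m ρ_i) for j = 1, ..., m, and b_0 = 1 − Σ_{j=1}^m b_j. Then for every k ∈ {1, ..., m}: 1 + Σ_{j=1}^m A_j b_j/(b_0 (A_j − B_k)) = 0. That is, B_1, ..., B_m are roots of the rational function λ ↦ 1 + Σ_{j=1}^m A_j b_j/(b_0(A_j − λ)), so the map 𝓛 of Lemma 2.2 sends (A_1 b_1, ..., A_m b_m, b_1, ..., b_m) to (A_1, ..., A_m, B_1, ..., B_m). -/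
/-!
With `P x = ∏ (B i - x)` and `Q x = ∏ (A i - x)`, both of degree `m` with the same leading
coefficient, `P - Q` has degree `< m`; Lagrange interpolation at the nodes `A j` gives the
partial-fraction decomposition `P x / Q x = 1 + ∑ A j ρ j / (A j - x)`. At `x = 0` it shows
`1 + ∑ ρ = ∏ B / ∏ A ≠ 0`, hence `b j / b0 = ρ j`, and at `x = B k` its left side vanishes.
-/

open Finset Polynomial

namespace Lagrange

variable {F ι : Type*} [Field F] {s : Finset ι} {v w : ι → F}

theorem degree_nodal_sub_nodal_lt : (nodal s w - nodal s v).degree < #s := by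
  have h := degree_sub_lt_left (p := nodal s w) (q := nodal s v)
    (degree_nodal.trans degree_nodal.symm) nodal_ne_zero
    (nodal_monic.leadingCoeff.trans nodal_monic.leadingCoeff.symm)
  rwa [degree_nodal] at h

variable [DecidableEq ι]

theorem eval_nodal_div_eval_nodal (hvs : Set.InjOn v s) {x : F} (hx : ∀ i ∈ s, x ≠ v i) :
    eval x (nodal s w) / eval x (nodal s v) =
      1 + ∑ i ∈ s, nodalWeight s v i * eval (v i) (nodal s w) / (x - v i) := by
  have hf := congrArg (eval x) (eq_interpolate hvs (degree_nodal_sub_nodal_lt (v := v) (w := w)))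
  rw [eval_interpolate_not_at_node _ hx, eval_sub] at hf
  have hq : eval x (nodal s v) ≠ 0 := eval_nodal_not_at_node hx
  calc eval x (nodal s w) / eval x (nodal s v)
      = 1 + (eval x (nodal s w) - eval x (nodal s v)) / eval x (nodal s v) := by
        field_simp; ring
    _ = _ := by
        rw [hf, mul_div_cancel_left₀ _ hq]
        refine congrArg _ (sum_congr rfl fun i hi => ?_)
        rw [eval_sub, eval_nodal_at_node hi, sub_zero, div_eq_mul_inv, mul_right_comm]

theorem nodalWeight_mul_eval_nodal {i : ι} (hi : i ∈ s) :
    nodalWeight s v i * eval (v i) (nodal s w) =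
      (v i - w i) * ∏ j ∈ s.erase i, (w j - v i) / (v j - v i) := by
  rw [nodalWeight, eval_nodal, ← mul_prod_erase s _ hi, mul_left_comm, ← prod_mul_distrib]
  congr 1
  refine prod_congr rfl fun j _ => ?_
  rw [← neg_sub (v i) (v j), ← neg_sub (v i) (w j), neg_div_neg_eq, div_eq_inv_mul]

end Lagrange

open Lagrange in
theorem prod_sub_div_prod_sub_eq_one_add_sum {F ι : Type*} [Field F] [DecidableEq ι]
    {s : Finset ι} {v : ι → F} (hvs : Set.InjOn v s) (w : ι → F) {x : F}
    (hx : ∀ i ∈ s, x ≠ v i) :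
    (∏ i ∈ s, (x - w i)) / ∏ i ∈ s, (x - v i) =
      1 + ∑ j ∈ s, (w j - v j) * (∏ i ∈ s.erase j, (w i - v j) / (v i - v j)) / (v j - x) := by
  rw [← eval_nodal, ← eval_nodal, eval_nodal_div_eval_nodal hvs hx]
  refine congrArg _ (sum_congr rfl fun j hj => ?_)
  rw [nodalWeight_mul_eval_nodal hj, ← neg_sub (w j), ← neg_sub (v j) x, neg_mul, neg_div_neg_eq]

section Interlacing

variable {m : ℕ} {A B : ℕ → ℝ} (hAB : ∀ j < m, A j < B j)
  (hBA : ∀ j, j + 1 < m → B j < A (j + 1))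
include hAB hBA

theorem strictMonoOn_Iio_of_interlacing : StrictMonoOn A (Set.Iio m) :=
  strictMonoOn_of_lt_succ Set.ordConnected_Iio fun j _ hj hj' => by
    rw [Order.succ_eq_add_one] at hj' ⊢
    exact (hAB j hj).trans (hBA j hj')

theorem ne_of_interlacing {j k : ℕ} (hj : j < m) (hk : k < m) : A j ≠ B k := by
  have hmono := (strictMonoOn_Iio_of_interlacing hAB hBA).monotoneOn
  rcases le_or_gt j k with hjk | hkj
  · exact ((hmono hj hk hjk).trans_lt (hAB k hk)).ne
  · exact ((hBA k (by omega)).trans_le (hmono (by simp; omega) hj hkj)).ne'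

end Interlacing

theorem stmt_10_general (m : ℕ) (A B : ℕ → ℝ)
    (hA0 : 0 < A 0)
    (hAB : ∀ j < m, A j < B j)
    (hBA : ∀ j, j + 1 < m → B j < A (j + 1))
    (ρ : ℕ → ℝ)
    (hρ : ∀ j, ρ j = (B j - A j) / A j *
      ∏ i ∈ (Finset.range m).erase j, (B i - A j) / (A i - A j))
    (b : ℕ → ℝ)
    (hb : ∀ j, b j = ρ j / (1 + ∑ i ∈ Finset.range m, ρ i))
    (b0 : ℝ) (hb0 : b0 = 1 - ∑ j ∈ Finset.range m, b j) :
    ∀ k < m, 1 + ∑ j ∈ Finset.range m, A j * b j / (b0 * (A j - B k)) = 0 := by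
  intro k hk
  have hmono := strictMonoOn_Iio_of_interlacing hAB hBA
  have hinj : Set.InjOn A (range m) := by rw [coe_range]; exact hmono.injOn
  have hApos : ∀ j ∈ range m, 0 < A j := fun j hj =>
    hA0.trans_le (hmono.monotoneOn (by simp; omega) (by simpa using hj) j.zero_le)
  have hS : 1 + ∑ i ∈ range m, ρ i = (∏ i ∈ range m, (0 - B i)) / ∏ i ∈ range m, (0 - A i) := by
    rw [prod_sub_div_prod_sub_eq_one_add_sum hinj B fun i hi => (hApos i hi).ne]
    refine congrArg _ (sum_congr rfl fun j _ => ?_)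
    rw [hρ, sub_zero, mul_div_right_comm]
  have hS0 : 1 + ∑ i ∈ range m, ρ i ≠ 0 := by
    rw [hS]
    refine div_ne_zero (prod_ne_zero_iff.2 fun i hi => ?_) (prod_ne_zero_iff.2 fun i hi => ?_)
    · linarith [hApos i hi, hAB i (mem_range.1 hi)]
    · linarith [hApos i hi]
  have hb0' : b0 = (1 + ∑ i ∈ range m, ρ i)⁻¹ := by
    rw [hb0, sum_congr rfl fun j _ => hb j, ← sum_div]
    field_simp
    ring
  calc 1 + ∑ j ∈ range m, A j * b j / (b0 * (A j - B k))
      = 1 + ∑ j ∈ range m, (B j - A j) * (∏ i ∈ (range m).erase j, (B i - A j) / (A i - A j)) /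
          (A j - B k) := by
        refine congrArg _ (sum_congr rfl fun j hj => ?_)
        have hAj := (hApos j hj).ne'
        rw [hb, hb0', hρ]
        field_simp
    _ = (∏ i ∈ range m, (B k - B i)) / ∏ i ∈ range m, (B k - A i) :=
        (prod_sub_div_prod_sub_eq_one_add_sum hinj B fun i hi =>
          (ne_of_interlacing hAB hBA (mem_range.1 hi) hk).symm).symm
    _ = 0 := by rw [prod_eq_zero (mem_range.2 hk) (sub_self _), zero_div]

/-- Given reals `0 < A_1 < B_1 < … < A_m < B_m` (0-indexed), with
`ρ_j = ((B_j − A_j)/A_j) · ∏_{i ≠ j} (B_i − A_j)/(A_i − A_j)`,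
`b_j = ρ_j/(1 + ∑ᵢ ρ_i)` and `b_0 = 1 − ∑ⱼ b_j`, every `B_k` is a root of
`λ ↦ 1 + ∑ⱼ A_j b_j/(b_0(A_j − λ))`; i.e. the map `𝓛` sends
`(A_1 b_1, …, A_m b_m, b_1, …, b_m)` to `(A_1, …, A_m, B_1, …, B_m)`. -/
theorem stmt_10 (m : ℕ) (hm : 1 ≤ m) (A B : ℕ → ℝ)
    (hA0 : 0 < A 0)
    (hAB : ∀ j < m, A j < B j)
    (hBA : ∀ j, j + 1 < m → B j < A (j + 1))
    (ρ : ℕ → ℝ)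
    (hρ : ∀ j, ρ j = (B j - A j) / A j *
      ∏ i ∈ (Finset.range m).erase j, (B i - A j) / (A i - A j))
    (b : ℕ → ℝ)
    (hb : ∀ j, b j = ρ j / (1 + ∑ i ∈ Finset.range m, ρ i))
    (b0 : ℝ) (hb0 : b0 = 1 - ∑ j ∈ Finset.range m, b j) :
    ∀ k < m, 1 + ∑ j ∈ Finset.range m, A j * b j / (b0 * (A j - B k)) = 0 :=
  stmt_10_general m A B hA0 hAB hBA ρ hρ b hb b0 hb0
end

section
/- Let m ≥ 1, let c_1, ..., c_m be positive reals and ω_0, ω_1, ..., ω_m be positive reals, set A_j = c_j/ω_j, and assume A_1 < A_2 < ... < A_m. Let M be the (m+1)×(m+1) real matrix with M_{00} = (Σ_{j=1}^m c_j)/ω_0, M_{0j} = −c_j/ω_0, M_{j0} = −c_j/ω_j, M_{jj} = c_j/ω_j for 1 ≤ j ≤ m, and all other entries zero, and let F(λ) = 1 + Σ_{j=1}^m A_j ω_j/(ω_0 (A_j − λ)). Then a real number λ is an eigenvalue of M (i.e., M v = λ v for some nonzero v ∈ ℝ^{m+1}) if and only if λ = 0, or λ ∉ {A_1, ..., A_m}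 and F(λ) = 0. -/
/-!
Every row of `M` sums to zero, so `0` is an eigenvalue with the constant eigenvector. For
`λ ≠ A_j`, row `j ≥ 1` of `M v = λ v` forces `v_j = A_j v_0 / (A_j - λ)`, so `v` is determined
by `v_0 ≠ 0`, and row `0` then reads `λ F(λ) v_0 = 0`. Finally `λ = A_k` is never an eigenvalue:
row `k` gives `v_0 = 0` (as `A_k ≠ 0`), the other rows `j ≥ 1` give `v_j = 0` (the `A_j` are
distinct), and row `0` then gives `v_k = 0`.
-/

open Finset Matrix

section NeumannMatrix

variable {K : Type*} [Field K] {n : ℕ} (ω₀ : K) (ω A : Fin n → K)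

/-- The matrix (3.5), indexed by `Fin (n + 1)` with `0` for `Ω₀` and `j.succ` for `Ω_{j+1}`,
and written in terms of `ω` and `A`, so that `c_j = A_j ω_j`. -/
def neumannMatrix : Matrix (Fin (n + 1)) (Fin (n + 1)) K :=
  Matrix.of fun i j =>
    Fin.cases (Fin.cases ((∑ k, A k * ω k) / ω₀) (fun j => -(A j * ω j) / ω₀) j)
      (fun i => Fin.cases (-A i) (fun j => if i = j then A i else 0) j) i

/-- The function `F` of (2.4). -/
def secular (lam : K) : K := 1 + ∑ j, A j * ω j / (ω₀ * (A j - lam))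

theorem neumannMatrix_mulVec_apply_zero (v : Fin (n + 1) → K) :
    (neumannMatrix ω₀ ω A *ᵥ v) 0 = ∑ k, A k * ω k / ω₀ * (v 0 - v k.succ) := by
  simp only [mulVec, dotProduct, Fin.sum_univ_succ, neumannMatrix, of_apply,
    Fin.cases_zero, Fin.cases_succ]
  rw [sum_div, sum_mul, ← sum_add_distrib]
  exact sum_congr rfl fun k _ => by ring

theorem neumannMatrix_mulVec_apply_succ (v : Fin (n + 1) → K) (i : Fin n) :
    (neumannMatrix ω₀ ω A *ᵥ v) i.succ = A i * (v i.succ - v 0) := by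
  simp [mulVec, dotProduct, Fin.sum_univ_succ, neumannMatrix]
  ring

variable {ω₀ ω A} {lam : K} {v : Fin (n + 1) → K}

theorem neumannMatrix_mulVec_eq_smul_iff :
    neumannMatrix ω₀ ω A *ᵥ v = lam • v ↔
      lam * v 0 = ∑ k, A k * ω k / ω₀ * (v 0 - v k.succ) ∧
      ∀ i, lam * v i.succ = A i * (v i.succ - v 0) := by
  rw [funext_iff, Fin.forall_fin_succ]
  simp only [neumannMatrix_mulVec_apply_zero, neumannMatrix_mulVec_apply_succ, Pi.smul_apply,
    smul_eq_mul, eq_comm]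

theorem eq_div_mul_of_eigen_row {i : Fin n} (hi : lam ≠ A i)
    (hrow : lam * v i.succ = A i * (v i.succ - v 0)) :
    v i.succ = A i / (A i - lam) * v 0 := by
  have : A i - lam ≠ 0 := sub_ne_zero.2 hi.symm
  field_simp
  linear_combination -hrow

theorem sum_mul_sub_div_mul_eq_secular (hlam : ∀ k, lam ≠ A k) (x : K) :
    ∑ k, A k * ω k / ω₀ * (x - A k / (A k - lam) * x) = lam * (1 - secular ω₀ ω A lam) * x := by
  rw [secular, sub_add_cancel_left, mul_neg, mul_sum, ← sum_neg_distrib, sum_mul]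
  refine sum_congr rfl fun k _ => ?_
  have : A k - lam ≠ 0 := sub_ne_zero.2 (hlam k).symm
  field_simp
  ring

theorem eq_zero_of_neumannMatrix_mulVec_eq_smul (hω₀ : ω₀ ≠ 0) (hω : ∀ k, ω k ≠ 0)
    (hA : ∀ k, A k ≠ 0) (hinj : Function.Injective A) (k : Fin n)
    (hv : neumannMatrix ω₀ ω A *ᵥ v = A k • v) : v = 0 := by
  obtain ⟨hrow₀, hrow⟩ := neumannMatrix_mulVec_eq_smul_iff.1 hv
  have hv₀ : v 0 = 0 := by
    have : A k * v 0 = 0 := by linear_combination hrow k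
    exact (mul_eq_zero.1 this).resolve_left (hA k)
  have hvj : ∀ j ≠ k, v j.succ = 0 := fun j hj => by
    have : (A j - A k) * v j.succ = 0 := by linear_combination -hrow j + A j * hv₀
    exact (mul_eq_zero.1 this).resolve_left (sub_ne_zero.2 (hinj.ne hj))
  have hvk : v k.succ = 0 := by
    rw [hv₀, sum_eq_single k (fun j _ hj => by simp [hvj j hj])
      (by simp)] at hrow₀
    have : A k * ω k / ω₀ * v k.succ = 0 := by linear_combination hrow₀
    exact (mul_eq_zero.1 this).resolve_left (div_ne_zero (mul_ne_zero (hA k) (hω k)) hω₀)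
  ext i
  induction i using Fin.cases with
  | zero => exact hv₀
  | succ j => exact if h : j = k then h ▸ hvk else hvj j h

theorem exists_neumannMatrix_mulVec_eq_smul_iff (hω₀ : ω₀ ≠ 0) (hω : ∀ k, ω k ≠ 0)
    (hA : ∀ k, A k ≠ 0) (hinj : Function.Injective A) :
    (∃ v, v ≠ 0 ∧ neumannMatrix ω₀ ω A *ᵥ v = lam • v) ↔
      lam = 0 ∨ ((∀ k, lam ≠ A k) ∧ secular ω₀ ω A lam = 0) := by
  constructor
  · rintro ⟨v, hv, hMv⟩
    refine or_iff_not_imp_left.2 fun hlam => ?_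
    have hnode : ∀ k, lam ≠ A k := by
      rintro k rfl
      exact hv (eq_zero_of_neumannMatrix_mulVec_eq_smul hω₀ hω hA hinj k hMv)
    obtain ⟨hrow₀, hrow⟩ := neumannMatrix_mulVec_eq_smul_iff.1 hMv
    have hres : ∀ k, v k.succ = A k / (A k - lam) * v 0 :=
      fun k => eq_div_mul_of_eigen_row (hnode k) (hrow k)
    have hv₀ : v 0 ≠ 0 := by
      intro h
      refine hv (funext fun i => ?_)
      induction i using Fin.cases with
      | zero => exact h
      | succ k => rw [hres, h, mul_zero, Pi.zero_apply]
    simp only [hres, sum_mul_sub_div_mul_eq_secular hnode] at hrow₀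
    have : lam * v 0 * secular ω₀ ω A lam = 0 := by linear_combination hrow₀
    exact ⟨hnode, (mul_eq_zero.1 this).resolve_left (mul_ne_zero hlam hv₀)⟩
  · rintro (rfl | ⟨hnode, hF⟩)
    · refine ⟨1, one_ne_zero, neumannMatrix_mulVec_eq_smul_iff.2 ⟨?_, fun i => ?_⟩⟩ <;> simp
    · refine ⟨Fin.cons 1 fun k => A k / (A k - lam), fun h => one_ne_zero (congrFun h 0),
        neumannMatrix_mulVec_eq_smul_iff.2 ⟨?_, fun i => ?_⟩⟩
      · simpa [hF] using (sum_mul_sub_div_mul_eq_secular (ω := ω) (ω₀ := ω₀) hnode 1).symm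
      · have : A i - lam ≠ 0 := sub_ne_zero.2 (hnode i).symm
        simp only [Fin.cons_zero, Fin.cons_succ]
        field_simp
        ring

end NeumannMatrix

theorem sum_Icc_one_eq_sum_fin {M : Type*} [AddCommMonoid M] (f : ℕ → M) (m : ℕ) :
    ∑ j ∈ Icc 1 m, f j = ∑ j : Fin m, f (j + 1) := by
  rw [← Ico_add_one_right_eq_Icc, sum_Ico_eq_sum_range, Nat.add_sub_cancel,
    ← Fin.sum_univ_eq_sum_range]
  simp [add_comm]

theorem forall_Icc_one_iff_forall_fin (p : ℕ → Prop) (m : ℕ) :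
    (∀ j, 1 ≤ j → j ≤ m → p j) ↔ ∀ j : Fin m, p (j + 1) := by
  refine ⟨fun h j => h _ (Nat.le_add_left 1 j) j.isLt, fun h j h1 h2 => ?_⟩
  simpa [Nat.sub_add_cancel h1] using h ⟨j - 1, by omega⟩

theorem stmt_13_general (m : ℕ) (c ω : ℕ → ℝ)
    (hc : ∀ j, 1 ≤ j → j ≤ m → 0 < c j)
    (hω : ∀ j ≤ m, 0 < ω j)
    (A : ℕ → ℝ) (hA : ∀ j, A j = c j / ω j)
    (hAmono : ∀ i j, 1 ≤ i → i < j → j ≤ m → A i < A j)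
    (M : Matrix (Fin (m + 1)) (Fin (m + 1)) ℝ)
    (hM : ∀ i j : Fin (m + 1), M i j =
      if i = 0 then
        (if j = 0 then (∑ k ∈ Finset.Icc 1 m, c k) / ω 0 else -c j.val / ω 0)
      else
        (if j = 0 then -c i.val / ω i.val
         else if i = j then c i.val / ω i.val else 0))
    (lam : ℝ) :
    (∃ v : Fin (m + 1) → ℝ, v ≠ 0 ∧ M.mulVec v = lam • v) ↔
      (lam = 0 ∨ ((∀ j, 1 ≤ j → j ≤ m → lam ≠ A j) ∧
        1 + ∑ j ∈ Finset.Icc 1 m, A j * ω j / (ω 0 * (A j - lam)) = 0)) := by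
  have hωpos (j : Fin m) : 0 < ω (j + 1) := hω _ j.isLt
  have hωne (j : Fin m) : ω (j + 1) ≠ 0 := (hωpos j).ne'
  have hc_eq (j : Fin m) : c (j + 1) = A (j + 1) * ω (j + 1) := by
    rw [hA, div_mul_cancel₀ _ (hωne j)]
  have hMeq : M = neumannMatrix (ω 0) (fun j : Fin m => ω (j + 1)) (fun j => A (j + 1)) := by
    ext i j
    induction i using Fin.cases <;> induction j using Fin.cases <;>
      simp [hM, neumannMatrix, sum_Icc_one_eq_sum_fin, hc_eq, neg_div, hωne]
  rw [hMeq, exists_neumannMatrix_mulVec_eq_smul_iff (hω 0 m.zero_le).ne' hωne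
    (fun j => by rw [hA]; exact (div_pos (hc _ (Nat.le_add_left 1 j) j.isLt) (hωpos j)).ne')
    (StrictMono.injective fun i j hij => hAmono _ _ (Nat.le_add_left 1 i) (by omega) j.isLt),
    forall_Icc_one_iff_forall_fin, sum_Icc_one_eq_sum_fin]
  rfl

/-- With positive `c_1, …, c_m`, positive `ω_0, …, ω_m`,
`A_j = c_j/ω_j` strictly increasing, and `M` the matrix (3.5) of the paper,
a real `λ` is an eigenvalue of `M` iff `λ = 0`, or `λ ∉ {A_1, …, A_m}` and
`F(λ) = 1 + ∑ⱼ A_j ω_j/(ω_0(A_j − λ)) = 0`. -/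
theorem stmt_13 (m : ℕ) (hm : 1 ≤ m) (c ω : ℕ → ℝ)
    (hc : ∀ j, 1 ≤ j → j ≤ m → 0 < c j)
    (hω : ∀ j ≤ m, 0 < ω j)
    (A : ℕ → ℝ) (hA : ∀ j, A j = c j / ω j)
    (hAmono : ∀ i j, 1 ≤ i → i < j → j ≤ m → A i < A j)
    (M : Matrix (Fin (m + 1)) (Fin (m + 1)) ℝ)
    (hM : ∀ i j : Fin (m + 1), M i j =
      if i = 0 then
        (if j = 0 then (∑ k ∈ Finset.Icc 1 m, c k) / ω 0 else -c j.val / ω 0)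
      else
        (if j = 0 then -c i.val / ω i.val
         else if i = j then c i.val / ω i.val else 0))
    (lam : ℝ) :
    (∃ v : Fin (m + 1) → ℝ, v ≠ 0 ∧ M.mulVec v = lam • v) ↔
      (lam = 0 ∨ ((∀ j, 1 ≤ j → j ≤ m → lam ≠ A j) ∧
        1 + ∑ j ∈ Finset.Icc 1 m, A j * ω j / (ω 0 * (A j - lam)) = 0)) :=
  stmt_13_general m c ω hc hω A hA hAmono M hM lam
end

section
/- Let m ≥ 1, let c_1, ..., c_m be positive reals and ω_0, ω_1, ..., ω_m be positive reals, and set A_j = c_j/ω_j. Let M be the (m+1)×(m+1) real matrix with M_{00} = (Σ_{j=1}^m c_j)/ω_0, M_{0j} = −c_j/ω_0, M_{j0} = −c_j/ω_j, M_{jj} = c_j/ω_j for 1 ≤ j ≤ m, and all other entries zero, and let F(λ) = 1 + Σ_{j=1}^m A_j ω_j/(ω_0 (A_j − λ)). If λ is a real number with λ ∉ {A_1, ..., A_m} and λ·F(λ) = 0, then the vector v ∈ ℝ^{m+1} with components v_0 = 1 and v_j = A_j/(A_j − λ) for 1 ≤ j ≤ m satisfies M v = λ v; in particular v ≠ 0,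 so λ is an eigenvalue of M. -/
/-- With positive `c_1, …, c_m`, positive `ω_0, …, ω_m`,
`A_j = c_j/ω_j`, and `M` the matrix (3.5) of the paper, if `λ ∉ {A_1, …, A_m}`
satisfies `λ·F(λ) = 0` with `F(λ) = 1 + ∑ⱼ A_j ω_j/(ω_0(A_j − λ))`, then the
vector `v` with `v_0 = 1`, `v_j = A_j/(A_j − λ)` satisfies `M v = λ v`; in
particular `v ≠ 0`, so `λ` is an eigenvalue of `M`. -/
theorem stmt_14 (m : ℕ) (hm : 1 ≤ m) (c ω : ℕ → ℝ)
    (hc : ∀ j, 1 ≤ j → j ≤ m → 0 < c j)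
    (hω : ∀ j ≤ m, 0 < ω j)
    (A : ℕ → ℝ) (hA : ∀ j, A j = c j / ω j)
    (M : Matrix (Fin (m + 1)) (Fin (m + 1)) ℝ)
    (hM : ∀ i j : Fin (m + 1), M i j =
      if i = 0 then
        (if j = 0 then (∑ k ∈ Finset.Icc 1 m, c k) / ω 0 else -c j.val / ω 0)
      else
        (if j = 0 then -c i.val / ω i.val
         else if i = j then c i.val / ω i.val else 0))
    (lam : ℝ) (hlam : ∀ j, 1 ≤ j → j ≤ m → lam ≠ A j)
    (hroot : lam * (1 + ∑ j ∈ Finset.Icc 1 m, A j * ω j / (ω 0 * (A j - lam))) = 0)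
    (v : Fin (m + 1) → ℝ)
    (hv : ∀ i : Fin (m + 1), v i = if i = 0 then 1 else A i.val / (A i.val - lam)) :
    M.mulVec v = lam • v ∧ v ≠ 0 := by
  have hω0 : (0:ℝ) < ω 0 := hω 0 (Nat.zero_le m)
  have hsub : ∀ j, 1 ≤ j → j ≤ m → A j - lam ≠ 0 := by
    intro j h1 h2
    have := hlam j h1 h2
    intro h
    exact this (by linarith)
  constructor
  · funext i
    simp only [Matrix.mulVec, dotProduct, Pi.smul_apply, smul_eq_mul]
    by_cases hi : i = 0
    · subst hi
      have hv0 : v 0 = 1 := by rw [hv]; simp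
      rw [hv0]
      rw [Fin.sum_univ_succ]
      have hterm : ∀ j : Fin m, M 0 j.succ * v j.succ =
          -c (j.val + 1) * (A (j.val + 1) / (A (j.val + 1) - lam)) / ω 0 := by
        intro j
        rw [hM, hv]
        simp [Fin.succ_ne_zero, Fin.val_succ]
        ring
      rw [Finset.sum_congr rfl (fun j _ => hterm j)]
      have hconv : ∑ j : Fin m, -c (j.val + 1) * (A (j.val + 1) / (A (j.val + 1) - lam)) / ω 0
          = ∑ k ∈ Finset.Icc 1 m, -c k * (A k / (A k - lam)) / ω 0 := by
        rw [Fin.sum_univ_eq_sum_range (fun n => -c (n + 1) * (A (n + 1) / (A (n + 1) - lam)) / ω 0)]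
        rw [show Finset.Icc 1 m = Finset.Ico 1 (m + 1) from (Finset.Ico_add_one_right_eq_Icc 1 m).symm,
          Finset.sum_Ico_eq_sum_range]
        simp [Nat.add_comm]
      have hM00 : M 0 0 = (∑ k ∈ Finset.Icc 1 m, c k) / ω 0 := by rw [hM]; norm_num
      rw [hconv, hM00, hv0, mul_one]
      -- reduce to the root equation
      have hAc : ∀ j, 1 ≤ j → j ≤ m → A j * ω j = c j := by
        intro j h1 h2
        rw [hA]
        field_simp [(hω j h2).ne']
      have hroot' : ∑ j ∈ Finset.Icc 1 m, lam * (c j / (ω 0 * (A j - lam))) = -lam := by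
        have : ∑ j ∈ Finset.Icc 1 m, A j * ω j / (ω 0 * (A j - lam))
            = ∑ j ∈ Finset.Icc 1 m, c j / (ω 0 * (A j - lam)) := by
          apply Finset.sum_congr rfl
          intro j hj
          rw [Finset.mem_Icc] at hj
          rw [hAc j hj.1 hj.2]
        rw [this] at hroot
        rw [← Finset.mul_sum]
        linarith [hroot]
      have key : ∀ j, 1 ≤ j → j ≤ m →
          c j / ω 0 + -c j * (A j / (A j - lam)) / ω 0 = -(lam * (c j / (ω 0 * (A j - lam)))) := by
        intro j h1 h2
        field_simp [hsub j h1 h2]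
        ring
      have : (∑ k ∈ Finset.Icc 1 m, c k) / ω 0
            + ∑ k ∈ Finset.Icc 1 m, -c k * (A k / (A k - lam)) / ω 0
          = ∑ k ∈ Finset.Icc 1 m, (c k / ω 0 + -c k * (A k / (A k - lam)) / ω 0) := by
        rw [Finset.sum_add_distrib, Finset.sum_div]
      rw [this,
        Finset.sum_congr rfl (fun j hj => key j (Finset.mem_Icc.mp hj).1 (Finset.mem_Icc.mp hj).2),
        Finset.sum_neg_distrib, hroot', neg_neg, mul_one]
    · -- row i, i ≠ 0
      have h1i : 1 ≤ i.val := Nat.one_le_iff_ne_zero.mpr (fun h => hi (Fin.ext h))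
      have h2i : i.val ≤ m := Nat.lt_succ_iff.mp i.isLt
      have hterm : ∀ j : Fin (m+1), M i j * v j =
          (if j = 0 then -c i.val / ω i.val else 0)
          + (if j = i then (c i.val / ω i.val) * v i else 0) := by
        intro j
        rw [hM]
        by_cases hj0 : j = 0
        · subst hj0
          have : v 0 = 1 := by rw [hv]; simp
          simp [hi, Ne.symm hi, this]
        · by_cases hji : j = i
          · subst hji
            simp [hi, hj0]
          · have hij : i ≠ j := fun h => hji h.symm
            simp [hi, hj0, hji, hij]
      rw [Finset.sum_congr rfl (fun j _ => hterm j), Finset.sum_add_distrib,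
        Finset.sum_ite_eq' Finset.univ (0 : Fin (m+1)), Finset.sum_ite_eq' Finset.univ i]
      simp only [Finset.mem_univ, if_true]
      have hvi : v i = A i.val / (A i.val - lam) := by rw [hv, if_neg hi]
      have hωi := (hω i.val h2i).ne'
      have hci : c i.val = A i.val * ω i.val := by rw [hA]; field_simp
      have hs := hsub i.val h1i h2i
      rw [hvi, hci]
      field_simp
      ring
  · intro h
    have := congrFun h 0
    rw [hv] at this
    simp at this
end

section
/- Let E and E' be nontrivial finite-dimensional complex inner product spaces, let T : E → E and T' : E' → E' be symmetric positive-semidefinite linear operators, and let λ_1 ≤ λ_2 ≤ ... ≤ λ_{dim E} and λ'_1 ≤ λ'_2 ≤ ... ≤ λ'_{dim E'} denote their eigenvalues listed in ascending order with multiplicity. Let n_1, n_2 ∈ ℕ, let δ_1, δ_2 ≥ 0, and let Φ : E → E' be a linear map such that for every u ∈ E: (i) ‖u‖² ≤ ‖Φu‖² + δ_1(‖u‖² + Re⟨T^{n_1} u, u⟩) and (ii) Re⟨T'(Φu), Φu⟩ ≤ Re⟨T u, u⟩ + δ_2(‖u‖² + Re⟨T^{n_2} u, u⟩). Then for every k with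 1 ≤ k ≤ min(dim E, dim E') such that 1 − (1 + λ_k^{n_1})δ_1 > 0, one has λ'_k ≤ λ_k + (λ_k(1 + λ_k^{n_1})δ_1 + (1 + λ_k^{n_2})δ_2)/(1 − (1 + λ_k^{n_1})δ_1). -/
/-!
Min–max argument. A dimension count gives `u ≠ 0` in the span of the first `k + 1` eigenvectors
of `T` with `Φ u` orthogonal to the first `k` eigenvectors of `T'`. Then
`Re⟨Tᵐ u, u⟩ ≤ λ_kᵐ ‖u‖²` and `λ'_k ‖Φ u‖² ≤ Re⟨T' Φu, Φu⟩`, so (i) gives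
`(1 - (1 + λ_k^{n₁}) δ₁) ‖u‖² ≤ ‖Φ u‖²`, and chaining this with (ii) yields
`λ'_k (1 - (1 + λ_k^{n₁}) δ₁) ≤ λ_k + (1 + λ_k^{n₂}) δ₂`.
-/

open scoped InnerProductSpace

theorem Module.exists_ne_zero_forall_eq_zero {K V J : Type*} [Field K] [AddCommGroup V]
    [Module K V] [FiniteDimensional K V] [Fintype J] (f : J → Module.Dual K V)
    (h : Fintype.card J < Module.finrank K V) : ∃ v ≠ 0, ∀ j, f j v = 0 := by
  have : LinearMap.ker (LinearMap.pi f) ≠ ⊥ :=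
    LinearMap.ker_ne_bot_of_finrank_lt (by simpa using h)
  obtain ⟨v, hv, hv0⟩ := (Submodule.ne_bot_iff _).mp this
  exact ⟨v, hv0, fun j => congrFun hv j⟩

namespace OrthonormalBasis

variable {𝕜 E ι : Type*} [RCLike 𝕜] [NormedAddCommGroup E] [InnerProductSpace 𝕜 E] [Fintype ι]
  (b : OrthonormalBasis ι 𝕜 E) {S : E →ₗ[𝕜] E}

theorem repr_map_apply_of_apply_eq_smul {μ : ι → 𝕜} (hS : ∀ i, S (b i) = μ i • b i)
    (v : E) (i : ι) : b.repr (S v) i = μ i * b.repr v i := by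
  classical
  conv_lhs => rw [← b.sum_repr v]
  simp [hS, smul_smul, b.repr_self, Pi.single_apply, mul_comm]

theorem re_inner_map_self_eq_sum {μ : ι → ℝ} (hS : ∀ i, S (b i) = (μ i : 𝕜) • b i) (v : E) :
    RCLike.re ⟪S v, v⟫_𝕜 = ∑ i, μ i * ‖b.repr v i‖ ^ 2 := by
  rw [← b.repr.inner_map_map, PiLp.inner_apply, map_sum]
  refine Finset.sum_congr rfl fun i _ => ?_
  rw [b.repr_map_apply_of_apply_eq_smul hS, RCLike.inner_apply, (starRingEnd 𝕜).map_mul,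
    RCLike.conj_ofReal, mul_left_comm, RCLike.mul_conj, ← RCLike.ofReal_pow, ← RCLike.ofReal_mul,
    RCLike.ofReal_re]

theorem norm_sq_eq_sum_norm_repr_sq (v : E) : ‖v‖ ^ 2 = ∑ i, ‖b.repr v i‖ ^ 2 := by
  rw [← b.repr.norm_map, EuclideanSpace.norm_sq_eq]

theorem re_inner_map_self_le {μ : ι → ℝ} (hS : ∀ i, S (b i) = (μ i : 𝕜) • b i) {v : E} {c : ℝ}
    (hv : ∀ i, b.repr v i ≠ 0 → μ i ≤ c) : RCLike.re ⟪S v, v⟫_𝕜 ≤ c * ‖v‖ ^ 2 := by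
  rw [b.re_inner_map_self_eq_sum hS, b.norm_sq_eq_sum_norm_repr_sq, Finset.mul_sum]
  refine Finset.sum_le_sum fun i _ => ?_
  by_cases hi : b.repr v i = 0
  · simp [hi]
  · exact mul_le_mul_of_nonneg_right (hv i hi) (by positivity)

theorem le_re_inner_map_self {μ : ι → ℝ} (hS : ∀ i, S (b i) = (μ i : 𝕜) • b i) {v : E} {c : ℝ}
    (hv : ∀ i, b.repr v i ≠ 0 → c ≤ μ i) : c * ‖v‖ ^ 2 ≤ RCLike.re ⟪S v, v⟫_𝕜 := by
  rw [b.re_inner_map_self_eq_sum hS, b.norm_sq_eq_sum_norm_repr_sq, Finset.mul_sum]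
  refine Finset.sum_le_sum fun i _ => ?_
  by_cases hi : b.repr v i = 0
  · simp [hi]
  · exact mul_le_mul_of_nonneg_right (hv i hi) (by positivity)

theorem re_inner_map_apply_self {μ : ι → ℝ} (hS : ∀ i, S (b i) = (μ i : 𝕜) • b i) (i : ι) :
    RCLike.re ⟪S (b i), b i⟫_𝕜 = μ i := by
  rw [hS, inner_smul_left, inner_self_eq_norm_sq_to_K, b.norm_eq_one]
  simp

end OrthonormalBasis

theorem OrthonormalBasis.exists_ne_zero_repr_support_le_map_repr_support_ge {𝕜 E E' : Type*}
    [RCLike 𝕜] [NormedAddCommGroup E] [InnerProductSpace 𝕜 E] [NormedAddCommGroup E']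
    [InnerProductSpace 𝕜 E'] {n n' : ℕ} (b : OrthonormalBasis (Fin n) 𝕜 E)
    (b' : OrthonormalBasis (Fin n') 𝕜 E') (Φ : E →ₗ[𝕜] E') {k : ℕ} (hk : k < n) :
    ∃ u ≠ 0, (∀ i, b.repr u i ≠ 0 → (i : ℕ) ≤ k) ∧ ∀ j, b'.repr (Φ u) j ≠ 0 → k ≤ (j : ℕ) := by
  have := b.toBasis.finiteDimensional_of_finite
  let f : {j : Fin n' // (j : ℕ) < k} ⊕ {i : Fin n // ¬ (i : ℕ) ≤ k} → Module.Dual 𝕜 E :=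
    Sum.elim (fun j => b'.toBasis.coord j ∘ₗ Φ) (fun i => b.toBasis.coord i)
  have hcard : Fintype.card ({j : Fin n' // (j : ℕ) < k} ⊕ {i : Fin n // ¬ (i : ℕ) ≤ k}) <
      Module.finrank 𝕜 E := by
    simp_rw [Module.finrank_eq_card_basis b.toBasis, Fintype.card_sum, Fintype.card_subtype_compl,
      Fintype.card_fin, Fintype.card_subtype, ← Nat.lt_succ_iff, Fin.card_filter_val_lt]
    omega
  obtain ⟨u, hu0, hu⟩ := Module.exists_ne_zero_forall_eq_zero f hcard
  refine ⟨u, hu0, fun i hi => ?_, fun j hj => ?_⟩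
  · by_contra h
    exact hi (by simpa [f] using hu (.inr ⟨i, h⟩))
  · by_contra h
    exact hj (by simpa [f] using hu (.inl ⟨j, not_le.mp h⟩))

theorem stmt_17_general
    {E E' : Type*}
    [NormedAddCommGroup E] [InnerProductSpace ℂ E]
    [NormedAddCommGroup E'] [InnerProductSpace ℂ E']
    (T : E →ₗ[ℂ] E) (T' : E' →ₗ[ℂ] E')
    (hTpos : ∀ u : E, 0 ≤ (inner ℂ (T u) u : ℂ).re)
    (hT'pos : ∀ u : E', 0 ≤ (inner ℂ (T' u) u : ℂ).re)
    (lam : Fin (Module.finrank ℂ E) → ℝ) (lam' : Fin (Module.finrank ℂ E') → ℝ)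
    (hlam : Monotone lam) (hlam' : Monotone lam')
    (b : OrthonormalBasis (Fin (Module.finrank ℂ E)) ℂ E)
    (b' : OrthonormalBasis (Fin (Module.finrank ℂ E')) ℂ E')
    (hb : ∀ i, T (b i) = (lam i : ℂ) • b i)
    (hb' : ∀ i, T' (b' i) = (lam' i : ℂ) • b' i)
    (n1 n2 : ℕ) (δ1 δ2 : ℝ) (hδ1 : 0 ≤ δ1) (hδ2 : 0 ≤ δ2)
    (Φ : E →ₗ[ℂ] E')
    (h1 : ∀ u : E, ‖u‖ ^ 2 ≤ ‖Φ u‖ ^ 2 +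
      δ1 * (‖u‖ ^ 2 + (inner ℂ ((T ^ n1) u) u : ℂ).re))
    (h2 : ∀ u : E, (inner ℂ (T' (Φ u)) (Φ u) : ℂ).re ≤ (inner ℂ (T u) u : ℂ).re +
      δ2 * (‖u‖ ^ 2 + (inner ℂ ((T ^ n2) u) u : ℂ).re)) :
    ∀ (k : ℕ) (hk : k < Module.finrank ℂ E) (hk' : k < Module.finrank ℂ E'),
      0 < 1 - (1 + lam ⟨k, hk⟩ ^ n1) * δ1 →
      lam' ⟨k, hk'⟩ ≤ lam ⟨k, hk⟩ +
        (lam ⟨k, hk⟩ * (1 + lam ⟨k, hk⟩ ^ n1) * δ1 + (1 + lam ⟨k, hk⟩ ^ n2) * δ2) /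
          (1 - (1 + lam ⟨k, hk⟩ ^ n1) * δ1) := by
  intro k hk hk' hpos
  set L := lam ⟨k, hk⟩
  set L' := lam' ⟨k, hk'⟩
  have hlam0 : ∀ i, 0 ≤ lam i := fun i => (hTpos _).trans_eq (b.re_inner_map_apply_self hb i)
  have hL'0 : 0 ≤ L' := (hT'pos _).trans_eq (b'.re_inner_map_apply_self hb' _)
  have hbpow : ∀ m i, (T ^ m) (b i) = ((lam i ^ m : ℝ) : ℂ) • b i := fun m i => by
    rw [Complex.ofReal_pow]
    exact (Module.End.hasEigenvector_iff.mpr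
      ⟨Module.End.mem_eigenspace_iff.mpr (hb i), b.orthonormal.ne_zero i⟩).pow_apply m
  obtain ⟨u, hu0, hu, hΦu⟩ := b.exists_ne_zero_repr_support_le_map_repr_support_ge b' Φ hk
  have hTu : ∀ m, (inner ℂ ((T ^ m) u) u).re ≤ L ^ m * ‖u‖ ^ 2 := fun m =>
    b.re_inner_map_self_le (hbpow m) fun i hi =>
      pow_le_pow_left₀ (hlam0 i) (hlam (show i ≤ ⟨k, hk⟩ from hu i hi)) m
  have hT'Φu : L' * ‖Φ u‖ ^ 2 ≤ (inner ℂ (T' (Φ u)) (Φ u)).re :=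
    b'.le_re_inner_map_self hb' fun j hj => hlam' (show ⟨k, hk'⟩ ≤ j from hΦu j hj)
  have hΦ : (1 - (1 + L ^ n1) * δ1) * ‖u‖ ^ 2 ≤ ‖Φ u‖ ^ 2 := by
    nlinarith [h1 u, hTu n1]
  have key : L' * (1 - (1 + L ^ n1) * δ1) * ‖u‖ ^ 2 ≤ (L + (1 + L ^ n2) * δ2) * ‖u‖ ^ 2 :=
    calc L' * (1 - (1 + L ^ n1) * δ1) * ‖u‖ ^ 2
        ≤ L' * ‖Φ u‖ ^ 2 := by rw [mul_assoc]; exact mul_le_mul_of_nonneg_left hΦ hL'0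
      _ ≤ (inner ℂ (T u) u).re + δ2 * (‖u‖ ^ 2 + (inner ℂ ((T ^ n2) u) u).re) :=
        hT'Φu.trans (h2 u)
      _ ≤ L * ‖u‖ ^ 2 + δ2 * (‖u‖ ^ 2 + L ^ n2 * ‖u‖ ^ 2) := by
        gcongr
        · simpa using hTu 1
        · exact hTu n2
      _ = (L + (1 + L ^ n2) * δ2) * ‖u‖ ^ 2 := by ring
  rw [show L + (L * (1 + L ^ n1) * δ1 + (1 + L ^ n2) * δ2) / (1 - (1 + L ^ n1) * δ1)
      = (L + (1 + L ^ n2) * δ2) / (1 - (1 + L ^ n1) * δ1) by field_simp; ring, le_div_iff₀ hpos]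
  exact le_of_mul_le_mul_right key (pow_pos (norm_pos_iff.mpr hu0) 2)

/-- the eigenvalue-comparison lemma of [EP05], finite-dimensional
version: `E`, `E'` are nontrivial finite-dimensional complex inner product
spaces, `T`, `T'` symmetric positive-semidefinite operators whose eigenvalues,
listed in ascending order with multiplicity (via monotone lists `lam`, `lam'`
and orthonormal eigenbases `b`, `b'`), and `Φ : E → E'` a linear map satisfying
(i) `‖u‖² ≤ ‖Φu‖² + δ₁(‖u‖² + Re⟨Tⁿ¹u, u⟩)` and
(ii) `Re⟨T'(Φu), Φu⟩ ≤ Re⟨Tu, u⟩ + δ₂(‖u‖² + Re⟨Tⁿ²u, u⟩)` for all `u`. Then for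
every `k < min(dim E, dim E')` with `1 − (1 + λ_k^{n₁})δ₁ > 0`, one has
`λ'_k ≤ λ_k + (λ_k(1 + λ_k^{n₁})δ₁ + (1 + λ_k^{n₂})δ₂)/(1 − (1 + λ_k^{n₁})δ₁)`. -/
theorem stmt_17
    {E E' : Type*}
    [NormedAddCommGroup E] [InnerProductSpace ℂ E] [FiniteDimensional ℂ E] [Nontrivial E]
    [NormedAddCommGroup E'] [InnerProductSpace ℂ E'] [FiniteDimensional ℂ E'] [Nontrivial E']
    (T : E →ₗ[ℂ] E) (T' : E' →ₗ[ℂ] E')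
    (hTsym : T.IsSymmetric) (hT'sym : T'.IsSymmetric)
    (hTpos : ∀ u : E, 0 ≤ (inner ℂ (T u) u : ℂ).re)
    (hT'pos : ∀ u : E', 0 ≤ (inner ℂ (T' u) u : ℂ).re)
    (lam : Fin (Module.finrank ℂ E) → ℝ) (lam' : Fin (Module.finrank ℂ E') → ℝ)
    (hlam : Monotone lam) (hlam' : Monotone lam')
    (b : OrthonormalBasis (Fin (Module.finrank ℂ E)) ℂ E)
    (b' : OrthonormalBasis (Fin (Module.finrank ℂ E')) ℂ E')
    (hb : ∀ i, T (b i) = (lam i : ℂ) • b i)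
    (hb' : ∀ i, T' (b' i) = (lam' i : ℂ) • b' i)
    (n1 n2 : ℕ) (δ1 δ2 : ℝ) (hδ1 : 0 ≤ δ1) (hδ2 : 0 ≤ δ2)
    (Φ : E →ₗ[ℂ] E')
    (h1 : ∀ u : E, ‖u‖ ^ 2 ≤ ‖Φ u‖ ^ 2 +
      δ1 * (‖u‖ ^ 2 + (inner ℂ ((T ^ n1) u) u : ℂ).re))
    (h2 : ∀ u : E, (inner ℂ (T' (Φ u)) (Φ u) : ℂ).re ≤ (inner ℂ (T u) u : ℂ).re +
      δ2 * (‖u‖ ^ 2 + (inner ℂ ((T ^ n2) u) u : ℂ).re)) :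
    ∀ (k : ℕ) (hk : k < Module.finrank ℂ E) (hk' : k < Module.finrank ℂ E'),
      0 < 1 - (1 + lam ⟨k, hk⟩ ^ n1) * δ1 →
      lam' ⟨k, hk'⟩ ≤ lam ⟨k, hk⟩ +
        (lam ⟨k, hk⟩ * (1 + lam ⟨k, hk⟩ ^ n1) * δ1 + (1 + lam ⟨k, hk⟩ ^ n2) * δ2) /
          (1 - (1 + lam ⟨k, hk⟩ ^ n1) * δ1) :=
  stmt_17_general T T' hTpos hT'pos lam lam' hlam hlam' b b' hb hb' n1 n2 δ1 δ2 hδ1 hδ2 Φ h1 h2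
end
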